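/- Let τ ∈ (2,3), let L be a nonnegative random variable, and let a := sup{x : F_L(x) = 0}. Suppose condition (T): ∑_{k=1}^∞ (1/k)(F_L^{(-1)}(e^{-e^k}) − a) < ∞. Then for every constant C > 0 and every h ≥ 1, the integral ∫_{h}^{∞} (C/y) · F_{L-a}^{(-1)}(exp(−(τ-2)^{-y/2})) dy is finite. -/
import Mathlib


open MeasureTheory Filter Set

/-- Under the tightness condition (T),
`∑_k (1/k)(F_L^{(-1)}(e^{-e^k}) - a) < ∞` with `a = sup{x : F_L(x) = 0}`, the integral
`∫_{h}^{∞} (C/y) · F_{L-a}^{(-1)}(exp(-(τ-2)^{-y/2})) dy` is finite for every `C > 0`, `h ≥ 1`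
(note `F_{L-a}^{(-1)}(y) = F_L^{(-1)}(y) - a`). -/
theorem stmt16 (τ : ℝ) (hτ1 : 2 < τ) (hτ2 : τ < 3)
    (ν : Measure ℝ) [IsProbabilityMeasure ν] (hsupp : ν (Set.Iio 0) = 0)
    (F : ℝ → ℝ) (hF : ∀ x, F x = (ν (Set.Iic x)).toReal)
    (Finv : ℝ → ℝ) (hFinv : ∀ y, Finv y = sInf {x : ℝ | y ≤ F x})
    (a : ℝ) (ha : a = sSup {x : ℝ | F x = 0})
    (hT : Summable (fun k : ℕ =>
      (1 / ((k : ℝ) + 1)) * (Finv (Real.exp (-Real.exp ((k : ℝ) + 1))) - a)))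
    (C h : ℝ) (hC : 0 < C) (hh : 1 ≤ h) :
    (∫⁻ y in Set.Ici h,
        ENNReal.ofReal ((C / y) * (Finv (Real.exp (-(τ - 2) ^ (-y / 2))) - a))) < ⊤ := by
  -- Basic facts about F
  have hFmono : Monotone F := by
    intro x y hxy
    rw [hF, hF]
    exact ENNReal.toReal_mono (measure_lt_top ν _).ne
      (measure_mono (Set.Iic_subset_Iic.2 hxy))
  have hFneg : ∀ x : ℝ, x < 0 → F x = 0 := by
    intro x hx
    rw [hF]
    have : ν (Set.Iic x) = 0 :=
      measure_mono_null (fun z hz => lt_of_le_of_lt hz hx) hsupp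
    simp [this]
  have hzero_ne : {x : ℝ | F x = 0}.Nonempty := ⟨-1, hFneg _ (by norm_num)⟩
  -- existence of points with large F
  have hne : ∀ u : ℝ, u < 1 → {x : ℝ | u ≤ F x}.Nonempty := by
    intro u hu
    have h1 : Tendsto (fun x => ν (Set.Iic x)) atTop (nhds (ν Set.univ)) :=
      tendsto_measure_Iic_atTop ν
    have h2 : Tendsto F atTop (nhds 1) := by
      have h3 : Tendsto (fun x => (ν (Set.Iic x)).toReal) atTop
          (nhds ((ν Set.univ).toReal)) :=
        (ENNReal.tendsto_toReal (by simp)).comp h1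
      simp only [measure_univ, ENNReal.toReal_one] at h3
      convert h3 using 1
      ext x; exact hF x
    obtain ⟨x, hx⟩ := (h2.eventually_const_le hu).exists
    exact ⟨x, hx⟩
  have hbdd : ∀ u : ℝ, 0 < u → BddBelow {x : ℝ | u ≤ F x} := by
    intro u hu
    refine ⟨0, fun x hx => ?_⟩
    by_contra hx0
    push_neg at hx0
    have := hFneg x hx0
    simp only [Set.mem_setOf_eq] at hx
    linarith
  have haleFinv : ∀ u : ℝ, 0 < u → u < 1 → a ≤ Finv u := by
    intro u hu0 hu1
    rw [hFinv]
    refine le_csInf (hne u hu1) fun x hx => ?_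
    rw [ha]
    refine csSup_le hzero_ne fun x' hx' => ?_
    by_contra hlt
    push_neg at hlt
    have h4 : F x ≤ F x' := hFmono hlt.le
    simp only [Set.mem_setOf_eq] at hx hx'
    linarith
  have hFinvmono : ∀ u v : ℝ, 0 < u → u ≤ v → v < 1 → Finv u ≤ Finv v := by
    intro u v hu huv hv1
    rw [hFinv, hFinv]
    exact csInf_le_csInf (hbdd u hu) (hne v hv1) fun x hx => le_trans huv hx
  -- the constant c
  set c : ℝ := -Real.log (τ - 2) / 2 with hc_def
  have hτ0 : (0:ℝ) < τ - 2 := by linarith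
  have hlogneg : Real.log (τ - 2) < 0 := Real.log_neg hτ0 (by linarith)
  have hc : 0 < c := by rw [hc_def]; linarith
  have hrpow : ∀ y : ℝ, (τ - 2) ^ (-y / 2) = Real.exp (c * y) := by
    intro y
    rw [Real.rpow_def_of_pos hτ0]
    congr 1
    rw [hc_def]; ring
  -- auxiliary function g
  set g : ℝ → ℝ := fun z => Finv (Real.exp (-Real.exp z)) - a with hg_def
  have hu0 : ∀ z : ℝ, 0 < Real.exp (-Real.exp z) := fun z => Real.exp_pos _
  have hu1 : ∀ z : ℝ, Real.exp (-Real.exp z) < 1 := by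
    intro z
    rw [Real.exp_lt_one_iff]
    exact neg_neg_iff_pos.2 (Real.exp_pos z)
  have hgnonneg : ∀ z : ℝ, 0 ≤ g z := fun z =>
    sub_nonneg.2 (haleFinv _ (hu0 z) (hu1 z))
  have hganti : ∀ z w : ℝ, z ≤ w → g w ≤ g z := by
    intro z w hzw
    have : Real.exp (-Real.exp w) ≤ Real.exp (-Real.exp z) :=
      Real.exp_le_exp.2 (neg_le_neg (Real.exp_le_exp.2 hzw))
    exact sub_le_sub_right (hFinvmono _ _ (hu0 w) this (hu1 z)) a
  -- rewrite the integrand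
  have hI : ∀ y : ℝ,
      ENNReal.ofReal ((C / y) * (Finv (Real.exp (-(τ - 2) ^ (-y / 2))) - a))
        = ENNReal.ofReal ((C / y) * g (c * y)) := by
    intro y
    rw [hrpow y]
  simp only [hI]
  set b : ℝ := max h (1 / c) with hb_def
  have hhb : h ≤ b := le_max_left _ _
  have hsub : Set.Ici h ⊆ Set.Icc h b ∪ Set.Ici b := by
    intro y hy
    rcases le_or_gt y b with hyb | hyb
    · exact Or.inl ⟨hy, hyb⟩
    · exact Or.inr hyb.le
  have key := lintegral_mono_set (μ := volume)
    (f := fun y => ENNReal.ofReal ((C / y) * g (c * y))) hsub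
  refine lt_of_le_of_lt (key.trans (lintegral_union_le _ _ _)) (ENNReal.add_lt_top.2 ⟨?_, ?_⟩)
  · -- Part A : compact piece
    have hbound : ∀ y ∈ Set.Icc h b,
        ENNReal.ofReal ((C / y) * g (c * y)) ≤ ENNReal.ofReal (C * g (c * h)) := by
      intro y hy
      have hy1 : (1:ℝ) ≤ y := le_trans hh hy.1
      apply ENNReal.ofReal_le_ofReal
      have h1 : C / y ≤ C := by
        rw [div_le_iff₀ (by linarith)]
        nlinarith
      have h2 : g (c * y) ≤ g (c * h) :=
        hganti _ _ (mul_le_mul_of_nonneg_left hy.1 hc.le)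
      have h3 : 0 ≤ C / y := div_nonneg hC.le (by linarith)
      exact mul_le_mul h1 h2 (hgnonneg _) hC.le
    calc ∫⁻ y in Set.Icc h b, ENNReal.ofReal ((C / y) * g (c * y))
        ≤ ∫⁻ _ in Set.Icc h b, ENNReal.ofReal (C * g (c * h)) :=
          setLIntegral_mono measurable_const hbound
      _ = ENNReal.ofReal (C * g (c * h)) * volume (Set.Icc h b) :=
          setLIntegral_const _ _
      _ < ⊤ := ENNReal.mul_lt_top ENNReal.ofReal_lt_top (by rw [Real.volume_Icc]; exact ENNReal.ofReal_lt_top)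
  · -- Part B : tail
    have hcover : Set.Ici b ⊆ ⋃ k : ℕ, Set.Ico (((k:ℝ)+1)/c) (((k:ℝ)+2)/c) := by
      intro y hy
      have hyb : 1 / c ≤ y := le_trans (le_max_right _ _) hy
      have hcy : 1 ≤ c * y := by
        rw [div_le_iff₀ hc] at hyb
        linarith [hyb]
      set m := Nat.floor (c * y) with hm_def
      have hm1 : 1 ≤ m := Nat.le_floor (by exact_mod_cast hcy)
      have hfl : (m : ℝ) ≤ c * y := Nat.floor_le (by linarith)
      have hfl2 : c * y < (m : ℝ) + 1 := Nat.lt_floor_add_one _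
      refine Set.mem_iUnion.2 ⟨m - 1, ?_⟩
      have hcast : ((m - 1 : ℕ) : ℝ) = (m : ℝ) - 1 := by
        rw [Nat.cast_sub hm1]; simp
      constructor
      · rw [hcast, div_le_iff₀ hc]
        linarith [hfl]
      · rw [hcast, lt_div_iff₀ hc]
        linarith [hfl2]
    have hblock : ∀ k : ℕ,
        (∫⁻ y in Set.Ico (((k:ℝ)+1)/c) (((k:ℝ)+2)/c),
          ENNReal.ofReal ((C / y) * g (c * y)))
          ≤ ENNReal.ofReal (C * ((1 / ((k:ℝ)+1)) * g ((k:ℝ)+1))) := by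
      intro k
      have hk1 : (0:ℝ) < (k:ℝ) + 1 := by positivity
      have hbound : ∀ y ∈ Set.Ico (((k:ℝ)+1)/c) (((k:ℝ)+2)/c),
          ENNReal.ofReal ((C / y) * g (c * y))
            ≤ ENNReal.ofReal ((C * c / ((k:ℝ)+1)) * g ((k:ℝ)+1)) := by
        intro y hy
        have hylb : ((k:ℝ)+1)/c ≤ y := hy.1
        have hypos : 0 < y := lt_of_lt_of_le (by positivity) hylb
        have hcy : (k:ℝ)+1 ≤ c * y := by
          rw [div_le_iff₀ hc] at hylb
          linarith [hylb]
        apply ENNReal.ofReal_le_ofReal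
        have h1 : C / y ≤ C * c / ((k:ℝ)+1) := by
          have := div_le_div_of_nonneg_left hC.le (by positivity : (0:ℝ) < ((k:ℝ)+1)/c) hylb
          calc C / y ≤ C / (((k:ℝ)+1)/c) := this
            _ = C * c / ((k:ℝ)+1) := by field_simp
        have h2 : g (c * y) ≤ g ((k:ℝ)+1) := hganti _ _ hcy
        exact mul_le_mul h1 h2 (hgnonneg _) (by positivity)
      calc (∫⁻ y in Set.Ico (((k:ℝ)+1)/c) (((k:ℝ)+2)/c),
            ENNReal.ofReal ((C / y) * g (c * y)))
          ≤ ∫⁻ _ in Set.Ico (((k:ℝ)+1)/c) (((k:ℝ)+2)/c),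
            ENNReal.ofReal ((C * c / ((k:ℝ)+1)) * g ((k:ℝ)+1)) :=
            setLIntegral_mono measurable_const hbound
        _ = ENNReal.ofReal ((C * c / ((k:ℝ)+1)) * g ((k:ℝ)+1))
            * volume (Set.Ico (((k:ℝ)+1)/c) (((k:ℝ)+2)/c)) := setLIntegral_const _ _
        _ = ENNReal.ofReal ((C * c / ((k:ℝ)+1)) * g ((k:ℝ)+1)) * ENNReal.ofReal (1/c) := by
            rw [Real.volume_Ico]
            congr 1
            rw [div_sub_div_same]
            ring_nf
        _ ≤ ENNReal.ofReal (C * ((1 / ((k:ℝ)+1)) * g ((k:ℝ)+1))) := by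
            rw [← ENNReal.ofReal_mul (mul_nonneg (by positivity) (hgnonneg _))]
            apply ENNReal.ofReal_le_ofReal
            have : (C * c / ((k:ℝ)+1)) * g ((k:ℝ)+1) * (1/c)
                = C * ((1 / ((k:ℝ)+1)) * g ((k:ℝ)+1)) := by
              field_simp
            rw [this]
    calc (∫⁻ y in Set.Ici b, ENNReal.ofReal ((C / y) * g (c * y)))
        ≤ ∫⁻ y in ⋃ k : ℕ, Set.Ico (((k:ℝ)+1)/c) (((k:ℝ)+2)/c),
            ENNReal.ofReal ((C / y) * g (c * y)) := lintegral_mono_set hcover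
      _ ≤ ∑' k : ℕ, ∫⁻ y in Set.Ico (((k:ℝ)+1)/c) (((k:ℝ)+2)/c),
            ENNReal.ofReal ((C / y) * g (c * y)) := lintegral_iUnion_le _ _
      _ ≤ ∑' k : ℕ, ENNReal.ofReal (C * ((1 / ((k:ℝ)+1)) * g ((k:ℝ)+1))) :=
            ENNReal.tsum_le_tsum hblock
      _ < ⊤ := by
          rw [← ENNReal.ofReal_tsum_of_nonneg (fun k => mul_nonneg hC.le
            (mul_nonneg (by positivity) (hgnonneg _))) (hT.mul_left C)]
          exact ENNReal.ofReal_lt_top
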